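/- If cubic critical portraits K₁ and K₂ are friends, then there exists a chief Λ with K₁, K₂ ∈ C(Λ). Moreover, friendship is a closed relation: if K_i → K and K'_i → K' in CrP, and K_i and K'_i are friends for every i, then K and K' are friends. -/

import Mathlib

noncomputable section

open Filter Metric

/-- Points of the unit circle `S`. -/
abbrev SPt : Type := {z : ℂ // ‖z‖ = 1}

/-- The unit circle, as a subset of `ℂ`. -/
def circleSet : Set ℂ := {z : ℂ | ‖z‖ = 1}

/-- The open unit disk `D`. -/
def openDisk : Set ℂ := Metric.ball (0 : ℂ) 1

/-- The map `σ_d : S → S`, `z ↦ z ^ d`. -/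
def sigmaS (d : ℕ) (z : SPt) : SPt :=
  ⟨(z : ℂ) ^ d, by rw [norm_pow, z.2, one_pow]⟩

/-- A chord, identified with the unordered pair of its endpoints. -/
abbrev Chord : Type := Sym2 SPt

/-- The closed straight segment in `ℂ` spanned by a chord. -/
def chordSet : Chord → Set ℂ :=
  Sym2.lift ⟨fun a b => segment ℝ (a : ℂ) (b : ℂ), fun a b => segment_symm ℝ _ _⟩

/-- The image chord `σ_d(ℓ)`. -/
def chordMap (d : ℕ) : Chord → Chord := Sym2.map (sigmaS d)

/-- Two (distinct) chords cross if they intersect in the open unit disk. -/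
def Cross (c₁ c₂ : Chord) : Prop :=
  c₁ ≠ c₂ ∧ (chordSet c₁ ∩ chordSet c₂ ∩ openDisk).Nonempty

/-- The length `|ℓ|` of a chord: the normalized length of the shorter arc
subtended by its endpoints (total circle length 1). -/
def chordLength : Chord → ℝ :=
  Sym2.lift ⟨fun a b => |Complex.arg ((a : ℂ) / (b : ℂ))| / (2 * Real.pi), by
    intro a b
    dsimp only
    have h : ((b : ℂ) / (a : ℂ)) = ((a : ℂ) / (b : ℂ))⁻¹ := (inv_div _ _).symm
    rw [h, Complex.arg_inv]
    split_ifs with hpi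
    · rw [hpi]
    · rw [abs_neg]⟩

/-- A lamination: a family of pairwise non-crossing chords containing all
degenerate chords, whose union is compact. -/
structure Lamination : Type where
  leaves : Set Chord
  no_cross : ∀ ℓ₁ ∈ leaves, ∀ ℓ₂ ∈ leaves, ¬ Cross ℓ₁ ℓ₂
  diag_mem : ∀ z : SPt, Sym2.diag z ∈ leaves
  plus_compact : IsCompact (⋃ ℓ ∈ leaves, chordSet ℓ)

/-- `Λ⁺`, the union of all leaves of `Λ`. -/
def Lamination.plus (Λ : Lamination) : Set ℂ := ⋃ ℓ ∈ Λ.leaves, chordSet ℓ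

/-- Sibling `σ_d`-invariance of a lamination. -/
def Lamination.Invariant (Λ : Lamination) (d : ℕ) : Prop :=
  (∀ ℓ ∈ Λ.leaves, chordMap d ℓ ∈ Λ.leaves) ∧
  (∀ ℓ ∈ Λ.leaves, ∃ p ∈ Λ.leaves, chordMap d p = ℓ) ∧
  (∀ ℓ ∈ Λ.leaves, ¬ (chordMap d ℓ).IsDiag →
    ∃ s : Fin d → Chord, (∃ i, s i = ℓ) ∧ (∀ i, s i ∈ Λ.leaves) ∧
      Function.Injective s ∧
      (∀ i j, i ≠ j → chordSet (s i) ∩ chordSet (s j) = ∅) ∧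
      (∀ i, chordMap d (s i) = chordMap d ℓ))

/-- A lamination is nonempty if it has a nondegenerate leaf. -/
def Lamination.NonemptyLam (Λ : Lamination) : Prop := ∃ ℓ ∈ Λ.leaves, ¬ ℓ.IsDiag

/-- A gap of `Λ`: the closure of a connected component of `D ∖ Λ⁺`. -/
def IsGap (Λ : Lamination) (G : Set ℂ) : Prop :=
  ∃ x ∈ openDisk \ Λ.plus, G = closure (connectedComponentIn (openDisk \ Λ.plus) x)

/-- A finite gap: a gap meeting the circle in finitely many points. -/
def FiniteGap (Λ : Lamination) (G : Set ℂ) : Prop := IsGap Λ G ∧ (G ∩ circleSet).Finite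

/-- `ℓ` is an edge of `G`: a maximal nondegenerate straight segment (with
endpoints on the circle) contained in the boundary of `G`. -/
def IsEdge (G : Set ℂ) (ℓ : Chord) : Prop :=
  ¬ ℓ.IsDiag ∧ chordSet ℓ ⊆ frontier G ∧
    ∀ ℓ' : Chord, chordSet ℓ ⊆ chordSet ℓ' → chordSet ℓ' ⊆ frontier G →
      chordSet ℓ' = chordSet ℓ

/-- `σ_d(G)` for a set `G`: the convex hull of the image of `G ∩ S`. -/
def gapImage (d : ℕ) (G : Set ℂ) : Set ℂ :=
  convexHull ℝ ((fun z : ℂ => z ^ d) '' (G ∩ circleSet))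

/-- A lap of `Λ`: a finite gap, or (the segment of) a nondegenerate leaf not
contained in the boundary of a finite gap. -/
def IsLap (Λ : Lamination) (G : Set ℂ) : Prop :=
  FiniteGap Λ G ∨
    ∃ ℓ ∈ Λ.leaves, ¬ ℓ.IsDiag ∧ G = chordSet ℓ ∧
      ∀ H : Set ℂ, FiniteGap Λ H → ¬ chordSet ℓ ⊆ frontier H

/-- Distance between chords (Hausdorff distance between their segments). -/
def chordDist (c₁ c₂ : Chord) : ℝ := Metric.hausdorffDist (chordSet c₁) (chordSet c₂)

/-- Hausdorff convergence `Λ_i → Λ` of laminations (leaf sets converge in the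
Hausdorff metric on the compact space of chords). -/
def LamTendsto (Λi : ℕ → Lamination) (Λ : Lamination) : Prop :=
  ∀ ε > (0 : ℝ), ∀ᶠ n in atTop,
    (∀ ℓ ∈ (Λi n).leaves, ∃ ℓ' ∈ Λ.leaves, chordDist ℓ ℓ' < ε) ∧
    (∀ ℓ' ∈ Λ.leaves, ∃ ℓ ∈ (Λi n).leaves, chordDist ℓ ℓ' < ε)

/-- An isolated leaf of `Λ`: some neighborhood of it in the space of chords
contains no other leaf of `Λ`. -/
def IsolatedLeaf (Λ : Lamination) (ℓ : Chord) : Prop :=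
  ℓ ∈ Λ.leaves ∧ ∃ ε > (0 : ℝ), ∀ ℓ' ∈ Λ.leaves, chordDist ℓ' ℓ < ε → ℓ' = ℓ

/-- A perfect lamination: no isolated leaves. -/
def Lamination.PerfectLam (Λ : Lamination) : Prop := ∀ ℓ ∈ Λ.leaves, ¬ IsolatedLeaf Λ ℓ

/-- A set of chords closed under limits. -/
def ClosedChordSet (P : Set Chord) : Prop :=
  ∀ f : ℕ → Chord, (∀ n, f n ∈ P) → ∀ c : Chord,
    Tendsto (fun n => chordDist (f n) c) atTop (nhds 0) → c ∈ P

/-- A perfect set of chords: closed and with no isolated points. -/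
def PerfectChordSet (P : Set Chord) : Prop :=
  ClosedChordSet P ∧ ∀ c ∈ P, ∀ ε > (0 : ℝ), ∃ c' ∈ P, c' ≠ c ∧ chordDist c c' < ε

/-- The perfect part `Λᵖ` of `Λ`: the maximal perfect subset of its leaf set. -/
def perfectPart (Λ : Lamination) : Set Chord :=
  ⋃₀ {P : Set Chord | P ⊆ Λ.leaves ∧ PerfectChordSet P}

/-- A countable lamination: countably many nondegenerate leaves. -/
def Lamination.CountableLam (Λ : Lamination) : Prop :=
  {ℓ ∈ Λ.leaves | ¬ ℓ.IsDiag}.Countable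

/-- `Λc` is a chief of `Λ`: a minimal-by-inclusion nonempty sibling
`σ_d`-invariant sublamination of `Λ`. -/
def IsChiefOf (d : ℕ) (Λc Λ : Lamination) : Prop :=
  Λc.leaves ⊆ Λ.leaves ∧ Λc.Invariant d ∧ Λc.NonemptyLam ∧
    ∀ Λ' : Lamination, Λ'.leaves ⊆ Λc.leaves → Λ'.Invariant d → Λ'.NonemptyLam →
      Λ'.leaves = Λc.leaves

/-- A clean lamination: distinct non-disjoint leaves lie on the boundary of a
common finite gap. -/
def Lamination.Clean (Λ : Lamination) : Prop :=
  ∀ ℓ₁ ∈ Λ.leaves, ∀ ℓ₂ ∈ Λ.leaves, ℓ₁ ≠ ℓ₂ → (chordSet ℓ₁ ∩ chordSet ℓ₂).Nonempty →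
    ∃ G : Set ℂ, FiniteGap Λ G ∧ chordSet ℓ₁ ⊆ frontier G ∧ chordSet ℓ₂ ⊆ frontier G

/-- A limit lamination: a sibling `σ_3`-invariant lamination that is a limit of
clean sibling `σ_3`-invariant laminations. -/
def IsLimitLam (Λ : Lamination) : Prop :=
  Λ.Invariant 3 ∧
    ∃ Λi : ℕ → Lamination, (∀ n, (Λi n).Invariant 3 ∧ (Λi n).Clean) ∧ LamTendsto Λi Λ

/-- A chief: a chief of some nonempty limit lamination. -/
def IsChief (Λc : Lamination) : Prop :=
  ∃ Λ : Lamination, IsLimitLam Λ ∧ Λ.NonemptyLam ∧ IsChiefOf 3 Λc Λ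

/-- A `σ_3`-critical chord. -/
def IsCritChord (c : Chord) : Prop := ¬ c.IsDiag ∧ (chordMap 3 c).IsDiag

/-- An unordered pair of chords (candidate critical portrait). -/
abbrev Portrait : Type := Sym2 Chord

/-- A cubic critical portrait: an unordered pair of non-crossing
`σ_3`-critical chords. -/
def IsPortrait (K : Portrait) : Prop :=
  ∃ c y : Chord, K = s(c, y) ∧ IsCritChord c ∧ IsCritChord y ∧ ¬ Cross c y

/-- The space `CrP` of all cubic critical portraits. -/
def CrP : Set Portrait := {K | IsPortrait K}

/-- `I(ℓ)` for a critical chord `ℓ`: the open arc of length 1/3 cut off by `ℓ`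
(the points of the circle strictly separated from the center by `ℓ`). -/
def Iarc (ℓ : Chord) : Set SPt :=
  {z : SPt | (z : ℂ) ∉ chordSet ℓ ∧ (segment ℝ (0 : ℂ) (z : ℂ) ∩ chordSet ℓ).Nonempty}

/-- The forward orbit `{σ_3ⁿ(ℓ) : n ≥ 1}` of a critical chord `ℓ` (each image
is a single point of the circle). -/
def critOrbit (ℓ : Chord) : Set SPt :=
  {z : SPt | ∃ n, 1 ≤ n ∧ ∃ a ∈ ℓ, (sigmaS 3)^[n] a = z}

/-- A weak critical portrait. -/
def IsWeak (K : Portrait) : Prop :=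
  IsPortrait K ∧ ∃ c y : Chord, K = s(c, y) ∧
    (critOrbit c ∩ Iarc y = ∅ ∨ critOrbit y ∩ Iarc c = ∅)

/-- A strong critical portrait. -/
def IsStrong (K : Portrait) : Prop := IsPortrait K ∧ ¬ IsWeak K

/-- Distance between (critical) portraits, metrizing convergence of the
unordered pairs of chords. -/
def portraitDist : Portrait → Portrait → ℝ :=
  Sym2.lift₂ ⟨fun a b c d =>
      min (max (chordDist a c) (chordDist b d)) (max (chordDist a d) (chordDist b c)), by
    intro a₁ a₂ b₁ b₂
    constructor
    · dsimp only
      rw [min_comm, max_comm (chordDist a₁ b₂), max_comm (chordDist a₁ b₁)]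
    · dsimp only
      rw [min_comm]⟩

/-- Convergence `K_i → K` in `CrP`. -/
def PortraitTendsto (f : ℕ → Portrait) (K : Portrait) : Prop :=
  Tendsto (fun n => portraitDist (f n) K) atTop (nhds 0)

/-- A critical portrait is compatible with a lamination if none of its chords
crosses a leaf. -/
def Compat (K : Portrait) (Λ : Lamination) : Prop :=
  ∀ c ∈ K, ∀ ℓ ∈ Λ.leaves, ¬ Cross c ℓ

/-- `C(Λ)`: the set of critical portraits compatible with `Λ`. -/
def CC (Λ : Lamination) : Set Portrait := {K | K ∈ CrP ∧ Compat K Λ}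

/-- Friendship of critical portraits: both compatible with a common nonempty
limit lamination. -/
def Friends (K₁ K₂ : Portrait) : Prop :=
  ∃ Λ : Lamination, IsLimitLam Λ ∧ Λ.NonemptyLam ∧ K₁ ∈ CC Λ ∧ K₂ ∈ CC Λ

/-- A prime critical portrait: some friend of it has a weak friend. -/
def IsPrime (K : Portrait) : Prop :=
  ∃ K' K'' : Portrait, Friends K K' ∧ Friends K' K'' ∧ IsWeak K''

/-- A regular chief: a chief all of whose critical portraits have only strong
friends. -/
def RegularChief (Λ : Lamination) : Prop :=
  IsChief Λ ∧ ∀ K ∈ CC Λ, ∀ K' : Portrait, Friends K K' → IsStrong K'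

/-- A regular lamination: one having a regular chief. -/
def RegularLam (Λ : Lamination) : Prop :=
  ∃ Λc : Lamination, IsChiefOf 3 Λc Λ ∧ RegularChief Λc

/-- A regular critical portrait: one compatible with a regular chief. -/
def RegularPortrait (K : Portrait) : Prop :=
  ∃ Λ : Lamination, RegularChief Λ ∧ K ∈ CC Λ

/-- Rotation of a circle point by angle `2πt`. -/
def rotPt (t : ℝ) (a : SPt) : SPt :=
  ⟨Complex.exp ((t * (2 * Real.pi) : ℝ) * Complex.I) * (a : ℂ), by
    rw [norm_mul, a.2, mul_one, Complex.norm_exp_ofReal_mul_I]⟩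

/-- Circular betweenness: `b` lies on the (closed) counterclockwise arc from
`a` to `c` (and `a`, `b`, `c` occur in this counterclockwise order). -/
def CBtw (a b c : SPt) : Prop :=
  ∃ s t : ℝ, 0 ≤ s ∧ s ≤ t ∧ t < 1 ∧ b = rotPt s a ∧ c = rotPt t a

/-- An invariant gap: a gap `G` of some sibling `σ_3`-invariant lamination
with `σ_3(G) = G`. -/
def IsInvGap (G : Set ℂ) : Prop :=
  ∃ Λ : Lamination, Λ.Invariant 3 ∧ IsGap Λ G ∧ gapImage 3 G = G

/-- An infinite gap (meets the circle in infinitely many points). -/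
def InfiniteGapSet (G : Set ℂ) : Prop := (G ∩ circleSet).Infinite

/-- Two circle points lie in the closure of a common complementary arc of
`G ∩ S` (or coincide): the fibers of the edge-collapsing map of `∂G`. -/
def complArcFiber (G : Set ℂ) (z w : SPt) : Prop :=
  z = w ∨ ∃ x : SPt, (x : ℂ) ∉ G ∧
    z ∈ closure (connectedComponentIn {y : SPt | (y : ℂ) ∉ G} x) ∧
    w ∈ closure (connectedComponentIn {y : SPt | (y : ℂ) ∉ G} x)

/-- A quadratic invariant gap: an infinite invariant gap of degree 2, i.e.
after collapsing the complementary arcs (edges) of its boundary, `σ_3` induces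
a two-to-one covering map of the circle. -/
def QuadGap (G : Set ℂ) : Prop :=
  IsInvGap G ∧ InfiniteGapSet G ∧
    ∃ φ : SPt → SPt, Continuous φ ∧ Function.Surjective φ ∧
      (∀ z w : SPt, φ z = φ w ↔ complArcFiber G z w) ∧
      ∃ g : SPt → SPt, IsCoveringMap g ∧ (∀ w : SPt, Nat.card (g ⁻¹' {w}) = 2) ∧
        ∀ z : SPt, (z : ℂ) ∈ G → φ (sigmaS 3 z) = g (φ z)

/-- A critical portrait is compatible with a gap if none of its chords crosses
an edge of the gap. -/
def CompatGap (K : Portrait) (G : Set ℂ) : Prop :=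
  ∀ c ∈ K, ∀ ℓ : Chord, IsEdge G ℓ → ¬ Cross c ℓ

/-- A set of portraits closed in `CrP`. -/
def ClosedPortraitSet (A : Set Portrait) : Prop :=
  ∀ f : ℕ → Portrait, (∀ n, f n ∈ A) → ∀ K ∈ CrP, PortraitTendsto f K → K ∈ A

/-- A finite rotational lap: a finite lap on which `σ_3` acts as a
combinatorial rotation of the vertices. -/
def RotationalLap (Λ : Lamination) (G : Set ℂ) : Prop :=
  IsLap Λ G ∧ (G ∩ circleSet).Finite ∧ gapImage 3 G = G ∧
    (∀ z : SPt, (z : ℂ) ∈ G → ((sigmaS 3 z : SPt) : ℂ) ∈ G) ∧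
    ∀ a b c : SPt, (a : ℂ) ∈ G → (b : ℂ) ∈ G → (c : ℂ) ∈ G →
      CBtw a b c → CBtw (sigmaS 3 a) (sigmaS 3 b) (sigmaS 3 c)


/-!
Friends share a chief by Zorn's lemma: the closed nonempty sibling invariant sublaminations of a
nonempty invariant lamination are stable under intersections of chains. In such an intersection a
leaf keeps a preimage and a sibling triple because these range over finite sets, and a
nondegenerate leaf survives because `σ₃` doubles the length of short chords, so every member of
the chain has a leaf of length at least `1/3`, and such leaves accumulate.

For closedness, record a lamination by the compact set of endpoint pairs of its leaves. Along a
subsequence these sets converge in the Hausdorff metric to the endpoint set of a lamination `Λ`.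
Two chords cross iff the Cramer parameters of the intersection of their supporting lines lie in
`(0, 1)`, an open condition; hence leaves of `Λ` do not cross and the limit portraits remain
compatible with `Λ`. Sibling triples pass to the limit because endpoints of distinct siblings stay
at distance at least `min (1/3) (δ / 3)`, `δ` the length of their common image. Finally, a
diagonal argument makes `Λ` a limit of clean laminations.
-/

open Topology TopologicalSpace

instance : CompactSpace SPt := by
  have h : IsCompact {z : ℂ | ‖z‖ = 1} := by
    convert isCompact_sphere (0 : ℂ) 1 using 1
    ext; simp
  exact isCompact_iff_compactSpace.mp h

@[simp] lemma coe_sigmaS (d : ℕ) (z : SPt) : (sigmaS d z : ℂ) = (z : ℂ) ^ d := rfl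

lemma continuous_sigmaS (d : ℕ) : Continuous (sigmaS d) :=
  (continuous_subtype_val.pow d).subtype_mk _

lemma finite_sigmaS_preimage {d : ℕ} (hd : 0 < d) (z : SPt) : (sigmaS d ⁻¹' {z}).Finite := by
  refine ((Polynomial.nthRoots d (z : ℂ)).toFinset.finite_toSet.preimage
    Subtype.val_injective.injOn).subset fun u hu => ?_
  simp [Polynomial.mem_nthRoots hd, ← show sigmaS d u = z from hu]

lemma Sym2.finite_map_preimage {α β : Type*} {f : α → β} (hf : ∀ b, (f ⁻¹' {b}).Finite)
    (z : Sym2 β) : (Sym2.map f ⁻¹' {z}).Finite := by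
  induction z with | _ a b => ?_
  have hF := (hf a).union (hf b)
  refine ((hF.prod hF).image (Function.uncurry Sym2.mk)).subset fun p hp => ?_
  induction p with | _ u v => ?_
  rcases Sym2.eq_iff.mp hp with ⟨hu, hv⟩ | ⟨hu, hv⟩
  · exact ⟨(u, v), ⟨Or.inl hu, Or.inr hv⟩, rfl⟩
  · exact ⟨(u, v), ⟨Or.inr hu, Or.inl hv⟩, rfl⟩

lemma Sym2.eq_of_tendsto {X ι : Type*} [TopologicalSpace X] [T2Space X] {l : Filter ι} [l.NeBot]
    {f g : ι → X × X} {p q : X × X} (hf : Tendsto f l (𝓝 p)) (hg : Tendsto g l (𝓝 q))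
    (h : ∀ᶠ i in l, s((f i).1, (f i).2) = s((g i).1, (g i).2)) : s(p.1, p.2) = s(q.1, q.2) := by
  have hC : IsClosed {w : (X × X) × (X × X) | s(w.1.1, w.1.2) = s(w.2.1, w.2.2)} := by
    simp only [Sym2.mk_eq_mk_iff, Set.ofPred_or]
    exact (isClosed_eq continuous_fst continuous_snd).union
      (isClosed_eq continuous_fst (continuous_swap.comp continuous_snd))
  exact hC.mem_of_tendsto (hf.prodMk_nhds hg) h

lemma finite_chordMap_preimage {d : ℕ} (hd : 0 < d) (ℓ : Chord) :
    (chordMap d ⁻¹' {ℓ}).Finite :=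
  Sym2.finite_map_preimage (finite_sigmaS_preimage hd) ℓ

section Segments

variable {E : Type*} [NormedAddCommGroup E] [InnerProductSpace ℝ E]

lemma eq_zero_or_eq_one_of_norm_eq_one {a b : E} (ha : ‖a‖ = 1) (hb : ‖b‖ = 1) (hab : a ≠ b)
    {t : ℝ} (ht : ‖a + t • (b - a)‖ = 1) : t = 0 ∨ t = 1 := by
  have key : ∀ r : ℝ,
      ‖a + r • (b - a)‖ ^ 2 = 1 + 2 * r * inner ℝ a (b - a) + r ^ 2 * ‖b - a‖ ^ 2 := by
    intro r
    rw [norm_add_sq_real, real_inner_smul_right, norm_smul, ha, mul_pow, Real.norm_eq_abs, sq_abs]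
    ring
  have h1 := key 1
  have ht' := key t
  rw [one_smul, add_sub_cancel, hb] at h1
  rw [ht] at ht'
  have hne : ‖b - a‖ ^ 2 ≠ 0 := pow_ne_zero _ (norm_ne_zero_iff.mpr (sub_ne_zero.mpr hab.symm))
  have : t * (t - 1) * ‖b - a‖ ^ 2 = 0 := by linear_combination t * h1 - ht'
  rcases mul_eq_zero.mp ((mul_eq_zero.mp this).resolve_right hne) with h | h
  · exact Or.inl h
  · exact Or.inr (sub_eq_zero.mp h)

lemma eq_or_eq_of_mem_segment_of_norm_eq_one {a b x : E} (ha : ‖a‖ = 1) (hb : ‖b‖ = 1)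
    (hx : x ∈ segment ℝ a b) (hx1 : ‖x‖ = 1) : x = a ∨ x = b := by
  rcases eq_or_ne a b with rfl | hab
  · exact Or.inl (by simpa using hx)
  obtain ⟨t, -, rfl⟩ := (segment_eq_image' ℝ a b ▸ hx)
  rcases eq_zero_or_eq_one_of_norm_eq_one ha hb hab hx1 with rfl | rfl <;> simp

end Segments

lemma chordSet_mk (a b : SPt) : chordSet s(a, b) = segment ℝ (a : ℂ) b := rfl

lemma coe_mem_chordSet {ℓ : Chord} {p : SPt} (hp : p ∈ ℓ) : (p : ℂ) ∈ chordSet ℓ := by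
  induction ℓ using Sym2.ind with | h a b => ?_
  rcases Sym2.mem_iff.mp hp with rfl | rfl
  exacts [left_mem_segment _ _ _, right_mem_segment _ _ _]

lemma exists_mem_of_mem_chordSet {ℓ : Chord} {x : ℂ} (hx : x ∈ chordSet ℓ) (hx1 : ‖x‖ = 1) :
    ∃ p ∈ ℓ, (p : ℂ) = x := by
  induction ℓ using Sym2.ind with | h a b => ?_
  rcases eq_or_eq_of_mem_segment_of_norm_eq_one a.2 b.2 hx hx1 with rfl | rfl
  exacts [⟨a, Sym2.mem_mk_left _ _, rfl⟩, ⟨b, Sym2.mem_mk_right _ _, rfl⟩]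

lemma chordSet_injective : Function.Injective chordSet := by
  have key : ∀ {ℓ ℓ' : Chord}, chordSet ℓ ⊆ chordSet ℓ' → ∀ p ∈ ℓ, p ∈ ℓ' := fun h p hp => by
    obtain ⟨q, hq, hqp⟩ := exists_mem_of_mem_chordSet (h (coe_mem_chordSet hp)) p.2
    exact Subtype.ext hqp ▸ hq
  intro ℓ ℓ' h
  exact Sym2.ext fun p => ⟨key h.le p, key h.ge p⟩

lemma chordSet_nonempty (ℓ : Chord) : (chordSet ℓ).Nonempty := by
  induction ℓ using Sym2.ind with | h a b => exact ⟨a, left_mem_segment _ _ _⟩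

lemma norm_le_one_of_mem_chordSet {ℓ : Chord} {x : ℂ} (hx : x ∈ chordSet ℓ) : ‖x‖ ≤ 1 := by
  induction ℓ using Sym2.ind with | h a b => ?_
  simpa using (convex_closedBall (0 : ℂ) 1).segment_subset (by simp [a.2]) (by simp [b.2]) hx

lemma isCompact_chordSet (ℓ : Chord) : IsCompact (chordSet ℓ) := by
  induction ℓ using Sym2.ind with | h a b => ?_
  rw [chordSet_mk, segment_eq_image']
  exact isCompact_Icc.image (by fun_prop)

section Crossing

def det2 (z w : ℂ) : ℝ := z.re * w.im - z.im * w.re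

lemma exists_eq_smul_of_det2_eq_zero {u v : ℂ} (hu : u ≠ 0) (h : det2 u v = 0) :
    ∃ r : ℝ, v = r • u := by
  have hn : u.re ^ 2 + u.im ^ 2 ≠ 0 := by
    contrapose! hu
    apply Complex.ext <;> simp <;> nlinarith [sq_nonneg u.re, sq_nonneg u.im]
  refine ⟨(u.re * v.re + u.im * v.im) / (u.re ^ 2 + u.im ^ 2), ?_⟩
  unfold det2 at h
  apply Complex.ext <;>
    simp only [Complex.real_smul, Complex.mul_re, Complex.mul_im, Complex.ofReal_re,
      Complex.ofReal_im] <;> field_simp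
  · linear_combination -u.im * h
  · linear_combination u.re * h

lemma mul_det2_eq_of_eq {a b c d : ℂ} {t s : ℝ} (h : a + t • (b - a) = c + s • (d - c)) :
    t * det2 (b - a) (d - c) = det2 (c - a) (d - c) ∧
      s * det2 (b - a) (d - c) = det2 (c - a) (b - a) := by
  have hre := congrArg Complex.re h
  have him := congrArg Complex.im h
  simp only [Complex.add_re, Complex.add_im, Complex.real_smul, Complex.mul_re, Complex.mul_im,
    Complex.ofReal_re, Complex.ofReal_im, Complex.sub_re, Complex.sub_im] at hre him
  unfold det2
  simp only [Complex.sub_re, Complex.sub_im]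
  constructor
  · linear_combination (d.im - c.im) * hre - (d.re - c.re) * him
  · linear_combination (b.im - a.im) * hre - (b.re - a.re) * him

lemma eq_of_det2_ne_zero {a b c d : ℂ} (hD : det2 (b - a) (d - c) ≠ 0) :
    a + (det2 (c - a) (d - c) / det2 (b - a) (d - c)) • (b - a) =
      c + (det2 (c - a) (b - a) / det2 (b - a) (d - c)) • (d - c) := by
  have key : (det2 (c - a) (d - c) : ℂ) * (b - a) - det2 (c - a) (b - a) * (d - c) =
      det2 (b - a) (d - c) * (c - a) := by
    apply Complex.ext <;> simp [det2] <;> ring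
  have hD' : (det2 (b - a) (d - c) : ℂ) ≠ 0 := by exact_mod_cast hD
  simp only [Complex.real_smul, Complex.ofReal_div]
  field_simp
  linear_combination key

/-- The segments `[a, b]` and `[c, d]` are not parallel and meet at a point interior to both: by
Cramer's rule, the two quotients are the parameters of the intersection point on them. -/
def SegmentsCross (a b c d : ℂ) : Prop :=
  det2 (b - a) (d - c) ≠ 0 ∧ det2 (c - a) (d - c) / det2 (b - a) (d - c) ∈ Set.Ioo (0 : ℝ) 1 ∧
    det2 (c - a) (b - a) / det2 (b - a) (d - c) ∈ Set.Ioo (0 : ℝ) 1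

lemma isOpen_setOf_segmentsCross :
    IsOpen {q : ℂ × ℂ × ℂ × ℂ | SegmentsCross q.1 q.2.1 q.2.2.1 q.2.2.2} := by
  have hD : Continuous fun q : ℂ × ℂ × ℂ × ℂ => det2 (q.2.1 - q.1) (q.2.2.2 - q.2.2.1) := by
    unfold det2; fun_prop
  have hT : Continuous fun q : ℂ × ℂ × ℂ × ℂ => det2 (q.2.2.1 - q.1) (q.2.2.2 - q.2.2.1) := by
    unfold det2; fun_prop
  have hS : Continuous fun q : ℂ × ℂ × ℂ × ℂ => det2 (q.2.2.1 - q.1) (q.2.1 - q.1) := by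
    unfold det2; fun_prop
  have h₁ := (hT.continuousOn.div hD.continuousOn fun _ hq => hq).isOpen_inter_preimage
    (isOpen_ne_fun hD continuous_const) (isOpen_Ioo (a := (0 : ℝ)) (b := 1))
  have h₂ := ((hS.continuousOn.div hD.continuousOn fun _ hq => hq).mono
    Set.inter_subset_left).isOpen_inter_preimage h₁ (isOpen_Ioo (a := (0 : ℝ)) (b := 1))
  convert h₂ using 1
  ext q
  exact and_assoc.symm

lemma eq_or_eq_of_coe_eq_add_smul {a b p : SPt} (hab : (a : ℂ) ≠ b) {r : ℝ}
    (h : (p : ℂ) = a + r • (b - a)) : p = a ∨ p = b := by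
  rcases eq_zero_or_eq_one_of_norm_eq_one a.2 b.2 hab (h ▸ p.2) with rfl | rfl
  · exact Or.inl (Subtype.ext (by simpa using h))
  · exact Or.inr (Subtype.ext (by simpa using h))

lemma chord_eq_of_det2_eq_zero {a b c d : SPt} {t s : ℝ}
    (hts : (a : ℂ) + t • (b - a) = c + s • (d - c)) (hx : ‖(a : ℂ) + t • (b - a)‖ < 1)
    (hD : det2 (b - a) (d - c) = 0) : s(a, b) = s(c, d) := by
  have hab : (a : ℂ) ≠ b := by
    rintro h
    simp [h, b.2] at hx
  have hcd : (c : ℂ) ≠ d := by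
    rintro h
    rw [hts, h, sub_self, smul_zero, add_zero] at hx
    simp [d.2] at hx
  obtain ⟨r, hr⟩ := exists_eq_smul_of_det2_eq_zero (sub_ne_zero.2 hab.symm) hD
  simp only [Complex.real_smul] at hts hr
  have hc := eq_or_eq_of_coe_eq_add_smul (p := c) hab (r := t - s * r) (by
    simp only [Complex.real_smul]; push_cast; linear_combination -hts - s * hr)
  have hd := eq_or_eq_of_coe_eq_add_smul (p := d) hab (r := t + (1 - s) * r) (by
    simp only [Complex.real_smul]; push_cast; linear_combination -hts + (1 - s) * hr)
  rcases hc with rfl | rfl <;> rcases hd with rfl | rfl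
  exacts [absurd rfl hcd, rfl, Sym2.eq_swap, absurd rfl hcd]

lemma cross_iff_segmentsCross (a b c d : SPt) :
    Cross s(a, b) s(c, d) ↔ SegmentsCross a b c d := by
  constructor
  · rintro ⟨hne, x, ⟨hx₁, hx₂⟩, hx⟩
    rw [chordSet_mk, segment_eq_image'] at hx₁ hx₂
    obtain ⟨t, ht, rfl⟩ := hx₁
    obtain ⟨s, hs, hts⟩ := hx₂
    beta_reduce at hts
    have hxn : ‖(a : ℂ) + t • (b - a)‖ < 1 := mem_ball_zero_iff.mp hx
    have hxn' : ‖(c : ℂ) + s • (d - c)‖ < 1 := hts ▸ hxn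
    have hD : det2 (b - a) (d - c) ≠ 0 := fun hD => hne (chord_eq_of_det2_eq_zero hts.symm hxn hD)
    obtain ⟨htD, hsD⟩ := mul_det2_eq_of_eq hts.symm
    refine ⟨hD, ?_, ?_⟩
    · rw [← htD, mul_div_cancel_right₀ _ hD]
      refine ⟨ht.1.lt_of_ne ?_, ht.2.lt_of_ne ?_⟩ <;> rintro rfl <;> simp [a.2, b.2] at hxn
    · rw [← hsD, mul_div_cancel_right₀ _ hD]
      refine ⟨hs.1.lt_of_ne ?_, hs.2.lt_of_ne ?_⟩ <;> rintro rfl <;> simp [c.2, d.2] at hxn'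
  · rintro ⟨hD, ht, hs⟩
    have hab : (a : ℂ) ≠ b := fun h => hD (by simp [h, det2])
    refine ⟨fun h => hD ?_,
      (a : ℂ) + (det2 (c - a) (d - c) / det2 (b - a) (d - c)) • (b - a), ⟨?_, ?_⟩, ?_⟩
    · rcases Sym2.eq_iff.mp h with ⟨rfl, rfl⟩ | ⟨rfl, rfl⟩ <;>
        simp only [det2, Complex.sub_re, Complex.sub_im] <;> ring
    · rw [chordSet_mk, segment_eq_image']
      exact ⟨_, Set.Ioo_subset_Icc_self ht, rfl⟩
    · rw [chordSet_mk, eq_of_det2_ne_zero hD, segment_eq_image']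
      exact ⟨_, Set.Ioo_subset_Icc_self hs, rfl⟩
    · have hsub := openSegment_subset_ball_of_ne (z := (0 : ℂ)) (r := 1)
        (by simp [a.2]) (by simp [b.2]) hab
      rw [openSegment_eq_image'] at hsub
      exact hsub ⟨_, ht, rfl⟩

lemma isOpen_setOf_cross :
    IsOpen {q : (SPt × SPt) × (SPt × SPt) | Cross s(q.1.1, q.1.2) s(q.2.1, q.2.2)} := by
  have hf : Continuous fun q : (SPt × SPt) × (SPt × SPt) =>
      ((q.1.1 : ℂ), (q.1.2 : ℂ), (q.2.1 : ℂ), (q.2.2 : ℂ)) := by fun_prop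
  convert isOpen_setOf_segmentsCross.preimage hf using 1
  ext q
  exact cross_iff_segmentsCross _ _ _ _

lemma Filter.Tendsto.eventually_cross {ι : Type*} {l : Filter ι} {f g : ι → SPt × SPt}
    {p q : SPt × SPt} (hf : Tendsto f l (𝓝 p)) (hg : Tendsto g l (𝓝 q))
    (h : Cross s(p.1, p.2) s(q.1, q.2)) :
    ∀ᶠ i in l, Cross s((f i).1, (f i).2) s((g i).1, (g i).2) :=
  (hf.prodMk_nhds hg).eventually (isOpen_setOf_cross.mem_nhds h)

end Crossing

section LeafPairs

lemma isCompact_biUnion_chordSet {L : Set Chord}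
    (hL : IsClosed {q : SPt × SPt | s(q.1, q.2) ∈ L}) : IsCompact (⋃ ℓ ∈ L, chordSet ℓ) := by
  have h : (⋃ ℓ ∈ L, chordSet ℓ) = (fun z : (SPt × SPt) × ℝ =>
      (z.1.1 : ℂ) + z.2 • ((z.1.2 : ℂ) - z.1.1)) '' ({q | s(q.1, q.2) ∈ L} ×ˢ Set.Icc 0 1) := by
    ext x
    simp only [Set.mem_iUnion, Set.mem_image, Set.mem_prod, exists_prop]
    constructor
    · rintro ⟨ℓ, hℓ, hx⟩
      induction ℓ using Sym2.ind with | h a b => ?_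
      rw [chordSet_mk, segment_eq_image'] at hx
      obtain ⟨t, ht, rfl⟩ := hx
      exact ⟨((a, b), t), ⟨hℓ, ht⟩, rfl⟩
    · rintro ⟨⟨⟨a, b⟩, t⟩, ⟨hℓ, ht⟩, rfl⟩
      refine ⟨s(a, b), hℓ, ?_⟩
      rw [chordSet_mk, segment_eq_image']
      exact ⟨t, ht, rfl⟩
  rw [h]
  exact (hL.isCompact.prod isCompact_Icc).image (by fun_prop)

def Lamination.ofClosed (L : Set Chord) (no_cross : ∀ ℓ₁ ∈ L, ∀ ℓ₂ ∈ L, ¬ Cross ℓ₁ ℓ₂)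
    (diag_mem : ∀ z : SPt, Sym2.diag z ∈ L) (hL : IsClosed {q : SPt × SPt | s(q.1, q.2) ∈ L}) :
    Lamination :=
  ⟨L, no_cross, diag_mem, isCompact_biUnion_chordSet hL⟩

lemma Lamination.isClosed_setOf_mem_leaves (Λ : Lamination) :
    IsClosed {q : SPt × SPt | s(q.1, q.2) ∈ Λ.leaves} := by
  refine IsSeqClosed.isClosed fun q p hq hlim => ?_
  obtain ⟨a, b⟩ := p
  rcases eq_or_ne a b with rfl | hab
  · exact Λ.diag_mem a
  -- The midpoint of `[a, b]` lies on a leaf; any leaf other than `s(a, b)` through it would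
  -- cross the nearby leaves `q n`.
  have hmid : ∀ x y : ℂ, (1 / 2 : ℝ) • (x + y) ∈ segment ℝ x y := fun x y =>
    ⟨1 / 2, 1 / 2, by norm_num, by norm_num, by norm_num, (smul_add _ _ _).symm⟩
  have hcont : Continuous fun p : SPt × SPt => (1 / 2 : ℝ) • ((p.1 : ℂ) + p.2) := by fun_prop
  have hm : (1 / 2 : ℝ) • ((a : ℂ) + b) ∈ Λ.plus :=
    Λ.plus_compact.isClosed.mem_of_tendsto ((hcont.tendsto _).comp hlim)
      (Eventually.of_forall fun n => Set.mem_biUnion (hq n) (hmid _ _))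
  obtain ⟨ℓ, hℓ, hmℓ⟩ := Set.mem_iUnion₂.mp hm
  by_contra hnot
  induction ℓ using Sym2.ind with | h u v => ?_
  have hlt : ‖(1 / 2 : ℝ) • ((a : ℂ) + b)‖ < 1 := by
    simpa [a.2] using (norm_midpoint_lt_iff (by rw [a.2, b.2])).mpr (Subtype.coe_injective.ne hab)
  have hcross : Cross s(a, b) s(u, v) := ⟨fun h => hnot (show s(a, b) ∈ Λ.leaves from h ▸ hℓ),
    _, ⟨hmid _ _, hmℓ⟩, mem_ball_zero_iff.mpr hlt⟩
  obtain ⟨n, hn⟩ := (hlim.eventually_cross (tendsto_const_nhds (x := (u, v))) hcross).exists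
  exact Λ.no_cross _ (hq n) _ hℓ hn

def Lamination.endpoints (Λ : Lamination) : NonemptyCompacts (SPt × SPt) :=
  ⟨⟨_, Λ.isClosed_setOf_mem_leaves.isCompact⟩, ⟨(⟨1, by simp⟩, ⟨1, by simp⟩), Λ.diag_mem _⟩⟩

lemma Lamination.mem_endpoints {Λ : Lamination} {q : SPt × SPt} :
    q ∈ Λ.endpoints ↔ s(q.1, q.2) ∈ Λ.leaves :=
  Iff.rfl

end LeafPairs

section CubeExpansion

lemma dist_sigmaS_three_eq (a b : SPt) :
    dist (sigmaS 3 a) (sigmaS 3 b) = dist a b * ‖(a : ℂ) ^ 2 + a * b + b ^ 2‖ := by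
  rw [Subtype.dist_eq, Subtype.dist_eq, dist_eq_norm, dist_eq_norm, coe_sigmaS, coe_sigmaS,
    ← norm_mul]
  ring_nf

lemma dist_sigmaS_three_le (a b : SPt) : dist (sigmaS 3 a) (sigmaS 3 b) ≤ 3 * dist a b := by
  rw [dist_sigmaS_three_eq, mul_comm]
  gcongr
  refine (norm_add₃_le ..).trans ?_
  simp [a.2, b.2]
  norm_num

lemma two_mul_dist_le_dist_sigmaS_three {a b : SPt} (h : dist a b ≤ 1 / 3) :
    2 * dist a b ≤ dist (sigmaS 3 a) (sigmaS 3 b) := by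
  rw [dist_sigmaS_three_eq, mul_comm]
  gcongr
  rw [Subtype.dist_eq, dist_eq_norm] at h
  -- `a² + ab + b² = 3a² + (b - a)(2a + b)` with `‖(b - a)(2a + b)‖ ≤ 1/3 · 3`
  have h₁ : ‖((b : ℂ) - a) * (2 * a + b)‖ ≤ 1 := by
    rw [norm_mul, norm_sub_rev]
    have : ‖2 * (a : ℂ) + b‖ ≤ 3 := (norm_add_le _ _).trans (by simp [a.2, b.2]; norm_num)
    nlinarith [norm_nonneg ((a : ℂ) - b), norm_nonneg (2 * (a : ℂ) + b)]
  have h₂ := norm_sub_norm_le (3 * (a : ℂ) ^ 2) (-(((b : ℂ) - a) * (2 * a + b)))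
  rw [norm_neg, sub_neg_eq_add] at h₂
  have h₃ : ‖3 * (a : ℂ) ^ 2‖ = 3 := by simp [a.2]
  rw [h₃, show 3 * (a : ℂ) ^ 2 + (b - a) * (2 * a + b) = a ^ 2 + a * b + b ^ 2 by ring] at h₂
  linarith

lemma one_third_lt_dist_of_sigmaS_three_eq {a b : SPt} (hab : a ≠ b)
    (h : sigmaS 3 a = sigmaS 3 b) : 1 / 3 < dist a b := by
  by_contra! hle
  have := two_mul_dist_le_dist_sigmaS_three hle
  rw [h, dist_self] at this
  exact hab (dist_le_zero.mp (by linarith))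

lemma exists_long_leaf {L : Set Chord} (hL : ∀ ℓ ∈ L, chordMap 3 ℓ ∈ L)
    (hne : ∃ ℓ ∈ L, ¬ ℓ.IsDiag) : ∃ q : SPt × SPt, s(q.1, q.2) ∈ L ∧ 1 / 3 ≤ dist q.1 q.2 := by
  by_contra! hshort
  obtain ⟨ℓ, hℓ, hnd⟩ := hne
  induction ℓ using Sym2.ind with | h a b => ?_
  set f := Prod.map (sigmaS 3) (sigmaS 3)
  have hmem : ∀ n, s((f^[n] (a, b)).1, (f^[n] (a, b)).2) ∈ L := by
    intro n
    induction n with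
    | zero => exact hℓ
    | succ n ih => rw [Function.iterate_succ_apply']; exact hL _ ih
  have hgrow : ∀ n, 2 ^ n * dist a b ≤ dist (f^[n] (a, b)).1 (f^[n] (a, b)).2 := by
    intro n
    induction n with
    | zero => simp
    | succ n ih =>
      rw [Function.iterate_succ_apply', pow_succ', mul_assoc]
      exact (mul_le_mul_of_nonneg_left ih (by norm_num)).trans
        (two_mul_dist_le_dist_sigmaS_three (hshort _ (hmem n)).le)
  have hpos : 0 < dist a b := dist_pos.mpr fun h => hnd (Sym2.mk_isDiag_iff.mpr h)
  obtain ⟨n, hn⟩ := pow_unbounded_of_one_lt (1 / dist a b) one_lt_two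
  rw [div_lt_iff₀ hpos] at hn
  linarith [(hgrow n).trans (hshort _ (hmem n)).le]

end CubeExpansion

section Chief

/-- `Lamination.Invariant` for an arbitrary set of chords. -/
def SiblingInvariant (d : ℕ) (L : Set Chord) : Prop :=
  (∀ ℓ ∈ L, chordMap d ℓ ∈ L) ∧
  (∀ ℓ ∈ L, ∃ p ∈ L, chordMap d p = ℓ) ∧
  (∀ ℓ ∈ L, ¬ (chordMap d ℓ).IsDiag →
    ∃ s : Fin d → Chord, (∃ i, s i = ℓ) ∧ (∀ i, s i ∈ L) ∧
      Function.Injective s ∧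
      (∀ i j, i ≠ j → chordSet (s i) ∩ chordSet (s j) = ∅) ∧
      (∀ i, chordMap d (s i) = chordMap d ℓ))

lemma Set.Finite.inter_iInter_nonempty {α ι : Type*} [Nonempty ι] {F : Set α} (hF : F.Finite)
    {A : ι → Set α} (hA : Directed (· ⊇ ·) A) (h : ∀ i, (F ∩ A i).Nonempty) :
    (F ∩ ⋂ i, A i).Nonempty := by
  classical
  by_contra hempty
  have hout : ∀ x : hF.toFinset, ∃ i, (x : α) ∉ A i := fun x => by
    by_contra! hx
    exact hempty ⟨x, hF.mem_toFinset.mp x.2, Set.mem_iInter.mpr hx⟩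
  choose i hi using hout
  obtain ⟨j, hj⟩ := hA.finset_le (Finset.univ.image i)
  obtain ⟨x, hxF, hxA⟩ := h j
  exact hi ⟨x, hF.mem_toFinset.mpr hxF⟩ (hj _ (Finset.mem_image_of_mem _ (Finset.mem_univ _)) hxA)

lemma IsChain.directed_supset {α : Type*} {c : Set (Set α)} (hc : IsChain (· ⊆ ·) c) :
    Directed (· ⊇ ·) fun L : c => (L : Set α) :=
  IsChain.directed (f := id) hc.symm

variable {c : Set (Set Chord)}

lemma SiblingInvariant.sInter {d : ℕ} (hd : 0 < d) (hc : IsChain (· ⊆ ·) c) (hne : c.Nonempty)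
    (h : ∀ L ∈ c, SiblingInvariant d L) : SiblingInvariant d (⋂₀ c) := by
  have : Nonempty c := hne.to_subtype
  have hdir := hc.directed_supset
  rw [Set.sInter_eq_iInter]
  refine ⟨fun ℓ hℓ => Set.mem_iInter.mpr fun L => (h L L.2).1 ℓ (Set.mem_iInter.mp hℓ L),
    fun ℓ hℓ => ?_, fun ℓ hℓ himg => ?_⟩
  · obtain ⟨p, hpℓ, hp⟩ := (finite_chordMap_preimage hd ℓ).inter_iInter_nonempty hdir fun L => by
      obtain ⟨p, hp, hpℓ⟩ := (h L L.2).2.1 ℓ (Set.mem_iInter.mp hℓ L)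
      exact ⟨p, hpℓ, hp⟩
    exact ⟨p, hp, hpℓ⟩
  · -- sibling tuples of `ℓ` form a finite set, which meets every member of the chain
    set T := {s : Fin d → Chord | (∃ i, s i = ℓ) ∧ Function.Injective s ∧
      (∀ i j, i ≠ j → chordSet (s i) ∩ chordSet (s j) = ∅) ∧
      ∀ i, chordMap d (s i) = chordMap d ℓ}
    have hT : T.Finite := (Set.Finite.pi' fun _ =>
      finite_chordMap_preimage hd (chordMap d ℓ)).subset fun s hs => hs.2.2.2
    obtain ⟨s, hsT, hs⟩ := hT.inter_iInter_nonempty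
      (A := fun L : c => {s : Fin d → Chord | ∀ i, s i ∈ (L : Set Chord)})
      (hdir.mono_comp (· ⊇ ·) (g := fun L => {s : Fin d → Chord | ∀ i, s i ∈ L})
        fun _ _ hLL' _ hs i => hLL' (hs i)) fun L => by
        obtain ⟨s, hsℓ, hsL, hsT⟩ := (h L L.2).2.2 ℓ (Set.mem_iInter.mp hℓ L) himg
        exact ⟨s, ⟨hsℓ, hsT⟩, hsL⟩
    exact ⟨s, hsT.1, fun i => Set.mem_iInter.mpr fun L => Set.mem_iInter.mp hs L i, hsT.2⟩

lemma exists_nondegenerate_mem_sInter (hc : IsChain (· ⊆ ·) c) (hne : c.Nonempty)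
    (h : ∀ L ∈ c, IsClosed {q : SPt × SPt | s(q.1, q.2) ∈ L} ∧ (∀ ℓ ∈ L, chordMap 3 ℓ ∈ L) ∧
      ∃ ℓ ∈ L, ¬ ℓ.IsDiag) :
    ∃ ℓ ∈ ⋂₀ c, ¬ ℓ.IsDiag := by
  have : Nonempty c := hne.to_subtype
  set K := fun L : c => {q : SPt × SPt | s(q.1, q.2) ∈ (L : Set Chord) ∧ 1 / 3 ≤ dist q.1 q.2}
  have hK : ∀ L, IsClosed (K L) := fun L =>
    (h L L.2).1.inter (isClosed_le continuous_const (continuous_fst.dist continuous_snd))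
  obtain ⟨q, hq⟩ := IsCompact.nonempty_iInter_of_directed_nonempty_isCompact_isClosed K
    (hc.directed_supset.mono_comp (· ⊇ ·)
      (g := fun L => {q : SPt × SPt | s(q.1, q.2) ∈ L ∧ 1 / 3 ≤ dist q.1 q.2})
      fun _ _ hLL' _ hq => ⟨hLL' hq.1, hq.2⟩)
    (fun L => exists_long_leaf (h L L.2).2.1 (h L L.2).2.2) (fun L => (hK L).isCompact) hK
  refine ⟨s(q.1, q.2), Set.mem_sInter.mpr fun L hL => (Set.mem_iInter.mp hq ⟨L, hL⟩).1,
    fun hd => ?_⟩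
  have hlong := (Set.mem_iInter.mp hq (Classical.arbitrary c)).2
  rw [Sym2.mk_isDiag_iff.mp hd, dist_self] at hlong
  norm_num at hlong

lemma exists_isChiefOf {Λ : Lamination} (hinv : Λ.Invariant 3) (hne : Λ.NonemptyLam) :
    ∃ Λc : Lamination, IsChiefOf 3 Λc Λ := by
  set S : Set (Set Chord) := {L | L ⊆ Λ.leaves ∧ (∀ z, Sym2.diag z ∈ L) ∧
    IsClosed {q : SPt × SPt | s(q.1, q.2) ∈ L} ∧ SiblingInvariant 3 L ∧ ∃ ℓ ∈ L, ¬ ℓ.IsDiag}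
  have hchain : ∀ c ⊆ S, IsChain (· ⊆ ·) c → c.Nonempty → ∃ lb ∈ S, ∀ L ∈ c, lb ⊆ L := by
    intro c hcS hc hne
    obtain ⟨L₀, hL₀⟩ := hne
    have hclosed : IsClosed {q : SPt × SPt | s(q.1, q.2) ∈ ⋂₀ c} := by
      show IsClosed ((fun q : SPt × SPt => s(q.1, q.2)) ⁻¹' ⋂₀ c)
      rw [Set.preimage_sInter]
      exact isClosed_biInter fun L hL => (hcS hL).2.2.1
    exact ⟨⋂₀ c, ⟨(Set.sInter_subset_of_mem hL₀).trans (hcS hL₀).1,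
      fun z => Set.mem_sInter.mpr fun L hL => (hcS hL).2.1 z, hclosed,
      SiblingInvariant.sInter (by norm_num) hc ⟨L₀, hL₀⟩ fun L hL => (hcS hL).2.2.2.1,
      exists_nondegenerate_mem_sInter hc ⟨L₀, hL₀⟩ fun L hL =>
        ⟨(hcS hL).2.2.1, (hcS hL).2.2.2.1.1, (hcS hL).2.2.2.2⟩⟩,
      fun L hL => Set.sInter_subset_of_mem hL⟩
  obtain ⟨m, -, hmin⟩ := zorn_superset_nonempty S hchain Λ.leaves
    ⟨subset_rfl, Λ.diag_mem, Λ.isClosed_setOf_mem_leaves, hinv, hne⟩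
  obtain ⟨hmΛ, hdiag, hclosed, hinvm, hnem⟩ := hmin.1
  refine ⟨.ofClosed m (fun ℓ₁ h₁ ℓ₂ h₂ => Λ.no_cross _ (hmΛ h₁) _ (hmΛ h₂)) hdiag hclosed,
    hmΛ, hinvm, hnem, fun Λ' hsub hinv' hne' => ?_⟩
  exact (hmin.2 ⟨hsub.trans hmΛ, Λ'.diag_mem, Λ'.isClosed_setOf_mem_leaves, hinv', hne'⟩
    hsub).antisymm' hsub

end Chief

section HausdorffLimits

variable {α : Type*} [MetricSpace α] {K : ℕ → NonemptyCompacts α} {K₀ : NonemptyCompacts α}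

lemma NonemptyCompacts.mem_of_tendsto (hK : Tendsto K atTop (𝓝 K₀)) {ψ : ℕ → ℕ}
    (hψ : Tendsto ψ atTop atTop) {x : ℕ → α} (hx : ∀ n, x n ∈ K (ψ n)) {y : α}
    (hy : Tendsto x atTop (𝓝 y)) : y ∈ K₀ := by
  have hle : ∀ n, infDist y K₀ ≤ dist y (x n) + dist (K (ψ n)) K₀ := fun n => by
    calc infDist y K₀ ≤ infDist (x n) K₀ + dist y (x n) := infDist_le_infDist_add_dist
    _ ≤ infDist (x n) (K (ψ n)) + dist (K (ψ n)) K₀ + dist y (x n) := by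
      gcongr
      exact infDist_le_infDist_add_hausdorffDist (hausdorffEDist_ne_top_of_nonempty_of_bounded
        (K _).nonempty K₀.nonempty (K _).isCompact.isBounded K₀.isCompact.isBounded)
    _ = dist y (x n) + dist (K (ψ n)) K₀ := by rw [infDist_zero_of_mem (hx n)]; ring
  have hlim : Tendsto (fun n => dist y (x n) + dist (K (ψ n)) K₀) atTop (𝓝 0) := by
    simpa using ((tendsto_const_nhds (x := y)).dist hy).add
      ((tendsto_iff_dist_tendsto_zero.mp hK).comp hψ)
  exact (K₀.isCompact.isClosed.mem_iff_infDist_zero K₀.nonempty).mpr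
    (le_antisymm (ge_of_tendsto' hlim hle) infDist_nonneg)

lemma NonemptyCompacts.exists_tendsto_of_mem (hK : Tendsto K atTop (𝓝 K₀)) {y : α}
    (hy : y ∈ K₀) : ∃ x : ℕ → α, (∀ n, x n ∈ K n) ∧ Tendsto x atTop (𝓝 y) := by
  choose x hxK hx using fun n => (K n).isCompact.exists_infDist_eq_dist (K n).nonempty y
  refine ⟨x, hxK, tendsto_iff_dist_tendsto_zero.mpr ?_⟩
  have h := ((lipschitz_infDist_set y).continuous.tendsto K₀).comp hK
  rw [Function.comp_def, infDist_zero_of_mem hy] at h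
  simpa only [dist_comm, ← hx] using h

end HausdorffLimits

section LimitLamination

variable {Θ : ℕ → Lamination}

lemma exists_endpoints_eq_of_tendsto {R : NonemptyCompacts (SPt × SPt)}
    (hR : Tendsto (fun k => (Θ k).endpoints) atTop (𝓝 R)) :
    ∃ Λ : Lamination, Λ.endpoints = R := by
  have hswap : ∀ q ∈ R, q.swap ∈ R := fun q hq => by
    obtain ⟨x, hx, hxq⟩ := NonemptyCompacts.exists_tendsto_of_mem hR hq
    exact NonemptyCompacts.mem_of_tendsto hR tendsto_id
      (fun n => by simpa [Lamination.mem_endpoints, Sym2.eq_swap] using hx n)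
      ((continuous_swap.tendsto q).comp hxq)
  set L : Set Chord := {ℓ | ∃ q ∈ R, s(q.1, q.2) = ℓ}
  have hL : {q : SPt × SPt | s(q.1, q.2) ∈ L} = R := by
    ext q
    refine ⟨fun ⟨p, hp, hpq⟩ => ?_, fun hq => ⟨q, hq, rfl⟩⟩
    rcases Sym2.mk_eq_mk_iff.mp hpq with rfl | rfl
    exacts [hp, by simpa using hswap _ hp]
  refine ⟨.ofClosed L ?_ ?_ (hL ▸ R.isCompact.isClosed), NonemptyCompacts.ext hL⟩
  · rintro _ ⟨p, hp, rfl⟩ _ ⟨p', hp', rfl⟩ hcross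
    obtain ⟨x, hx, hxp⟩ := NonemptyCompacts.exists_tendsto_of_mem hR hp
    obtain ⟨x', hx', hxp'⟩ := NonemptyCompacts.exists_tendsto_of_mem hR hp'
    obtain ⟨n, hn⟩ := (hxp.eventually_cross hxp' hcross).exists
    exact (Θ n).no_cross _ (hx n) _ (hx' n) hn
  · intro z
    exact ⟨(z, z), NonemptyCompacts.mem_of_tendsto hR tendsto_id (x := fun _ => (z, z))
      (fun n => (Θ n).diag_mem z) tendsto_const_nhds, rfl⟩

lemma inter_chordSet_eq_empty_of_tendsto {f g : ℕ → SPt × SPt} {p q : SPt × SPt}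
    (hf : Tendsto f atTop (𝓝 p)) (hg : Tendsto g atTop (𝓝 q)) {ε : ℝ} (hε : 0 < ε)
    (h : ∀ n, chordSet s((f n).1, (f n).2) ∩ chordSet s((g n).1, (g n).2) = ∅ ∧
      ∀ a ∈ s((f n).1, (f n).2), ∀ b ∈ s((g n).1, (g n).2), ε ≤ dist a b) :
    chordSet s(p.1, p.2) ∩ chordSet s(q.1, q.2) = ∅ := by
  have hsep : ∀ a ∈ s(p.1, p.2), ∀ b ∈ s(q.1, q.2), ε ≤ dist a b := by
    have hC : IsClosed {w : (SPt × SPt) × (SPt × SPt) |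
        ∀ a ∈ s(w.1.1, w.1.2), ∀ b ∈ s(w.2.1, w.2.2), ε ≤ dist a b} := by
      simp only [Sym2.forall_mem_pair, Set.ofPred_and]
      exact ((isClosed_le (by fun_prop) (by fun_prop)).inter (isClosed_le (by fun_prop)
        (by fun_prop))).inter ((isClosed_le (by fun_prop) (by fun_prop)).inter
          (isClosed_le (by fun_prop) (by fun_prop)))
    exact hC.mem_of_tendsto (hf.prodMk_nhds hg) (Eventually.of_forall fun n => (h n).2)
  -- A common point on the circle is a common endpoint; a common point inside the disk makes the
  -- chords equal (sharing endpoints) or crossing, and then nearby chords cross too.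
  refine Set.eq_empty_iff_forall_notMem.mpr fun x ⟨hx₁, hx₂⟩ => ?_
  rcases (norm_le_one_of_mem_chordSet hx₁).lt_or_eq with hx | hx
  · by_cases heq : s(p.1, p.2) = s(q.1, q.2)
    · have := hsep _ (Sym2.mem_mk_left _ _) _ (heq ▸ Sym2.mem_mk_left p.1 p.2)
      rw [dist_self] at this
      linarith
    · obtain ⟨n, hn⟩ :=
        (hf.eventually_cross hg ⟨heq, x, ⟨hx₁, hx₂⟩, mem_ball_zero_iff.mpr hx⟩).exists
      obtain ⟨y, hy, -⟩ := hn.2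
      exact ((h n).1 ▸ hy : y ∈ (∅ : Set ℂ))
  · obtain ⟨a, ha, rfl⟩ := exists_mem_of_mem_chordSet hx₁ hx
    obtain ⟨b, hb, hab⟩ := exists_mem_of_mem_chordSet hx₂ hx
    have := hsep a ha b hb
    rw [Subtype.ext hab, dist_self] at this
    linarith

variable {Λ : Lamination}

lemma chordMap_mem_of_tendsto (hΛ : Tendsto (fun k => (Θ k).endpoints) atTop (𝓝 Λ.endpoints))
    {d : ℕ} (hfw : ∀ k, ∀ ℓ ∈ (Θ k).leaves, chordMap d ℓ ∈ (Θ k).leaves) :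
    ∀ ℓ ∈ Λ.leaves, chordMap d ℓ ∈ Λ.leaves := by
  intro ℓ hℓ
  induction ℓ using Sym2.ind with | h a b => ?_
  obtain ⟨x, hx, hxq⟩ := NonemptyCompacts.exists_tendsto_of_mem hΛ (y := (a, b)) hℓ
  exact NonemptyCompacts.mem_of_tendsto hΛ tendsto_id (fun n => hfw n _ (hx n))
    ((((continuous_sigmaS d).prodMap (continuous_sigmaS d)).tendsto (a, b)).comp hxq)

lemma exists_chordMap_eq_of_tendsto
    (hΛ : Tendsto (fun k => (Θ k).endpoints) atTop (𝓝 Λ.endpoints)) {d : ℕ}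
    (hpre : ∀ k, ∀ ℓ ∈ (Θ k).leaves, ∃ p ∈ (Θ k).leaves, chordMap d p = ℓ) :
    ∀ ℓ ∈ Λ.leaves, ∃ p ∈ Λ.leaves, chordMap d p = ℓ := by
  intro ℓ hℓ
  induction ℓ using Sym2.ind with | h a b => ?_
  obtain ⟨x, hx, hxq⟩ := NonemptyCompacts.exists_tendsto_of_mem hΛ (y := (a, b)) hℓ
  choose p hp hpx using fun n => hpre n _ (hx n)
  choose w hw using fun n => Sym2.mk_surjective (p n)
  obtain ⟨u, φ, hφ, hu⟩ := CompactSpace.tendsto_subseq w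
  have hσ := (continuous_sigmaS d).prodMap (continuous_sigmaS d)
  refine ⟨s(u.1, u.2), NonemptyCompacts.mem_of_tendsto hΛ hφ.tendsto_atTop
    (fun n => show s((w (φ n)).1, (w (φ n)).2) ∈ _ from (hw (φ n)).symm ▸ hp (φ n)) hu, ?_⟩
  exact Sym2.eq_of_tendsto ((hσ.tendsto u).comp hu) (hxq.comp hφ.tendsto_atTop)
    (Eventually.of_forall fun n => (congrArg (chordMap d) (hw (φ n))).trans (hpx (φ n)))

lemma min_le_dist_of_siblings {ℓ₁ ℓ₂ : Chord} (hdisj : chordSet ℓ₁ ∩ chordSet ℓ₂ = ∅)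
    {a b : SPt} (h₁ : chordMap 3 ℓ₁ = s(a, b)) (h₂ : chordMap 3 ℓ₂ = s(a, b)) {p q : SPt}
    (hp : p ∈ ℓ₁) (hq : q ∈ ℓ₂) : min (1 / 3) (dist a b / 3) ≤ dist p q := by
  have hpq : p ≠ q := by
    rintro rfl
    exact (hdisj ▸ ⟨coe_mem_chordSet hp, coe_mem_chordSet hq⟩ : (p : ℂ) ∈ (∅ : Set ℂ))
  have hσp : sigmaS 3 p ∈ chordMap 3 ℓ₁ := Sym2.mem_map.mpr ⟨p, hp, rfl⟩
  have hσq : sigmaS 3 q ∈ chordMap 3 ℓ₂ := Sym2.mem_map.mpr ⟨q, hq, rfl⟩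
  rw [h₁] at hσp
  rw [h₂] at hσq
  by_cases hσ : sigmaS 3 p = sigmaS 3 q
  · exact (min_le_left _ _).trans (one_third_lt_dist_of_sigmaS_three_eq hpq hσ).le
  · have hab : dist a b = dist (sigmaS 3 p) (sigmaS 3 q) := by
      rcases Sym2.mem_iff.mp hσp with h | h <;> rcases Sym2.mem_iff.mp hσq with h' | h' <;>
        simp_all [dist_comm]
    refine (min_le_right _ _).trans ?_
    rw [hab, div_le_iff₀ (by norm_num : (0 : ℝ) < 3), mul_comm]
    exact dist_sigmaS_three_le p q

def SiblingPairs (Λ : Lamination) (Y : Fin 3 → SPt × SPt) : Prop :=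
  (∀ i, s((Y i).1, (Y i).2) ∈ Λ.leaves) ∧
    (∀ i j, i ≠ j → chordSet s((Y i).1, (Y i).2) ∩ chordSet s((Y j).1, (Y j).2) = ∅) ∧
    ∀ i, chordMap 3 s((Y i).1, (Y i).2) = chordMap 3 s((Y 0).1, (Y 0).2)

lemma Lamination.Invariant.exists_siblingPairs {Λ : Lamination} (hinv : Λ.Invariant 3)
    {p : SPt × SPt} (hp : s(p.1, p.2) ∈ Λ.leaves) (himg : ¬ (chordMap 3 s(p.1, p.2)).IsDiag) :
    ∃ Y : Fin 3 → SPt × SPt, Y 0 = p ∧ SiblingPairs Λ Y := by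
  obtain ⟨t, ⟨i₀, hi₀⟩, hmem, -, hdisj, hmap⟩ := hinv.2.2 _ hp himg
  have hrep : ∀ j, ∃ w : SPt × SPt, s(w.1, w.2) = t j ∧ (j = i₀ → w = p) := fun j => by
    by_cases hj : j = i₀
    · exact ⟨p, hj ▸ hi₀.symm, fun _ => rfl⟩
    · obtain ⟨w, hw⟩ := Sym2.mk_surjective (t j)
      exact ⟨w, hw, fun h => absurd h hj⟩
  choose w hw hwp using hrep
  have hw0 : w (Equiv.swap 0 i₀ 0) = p := hwp _ (Equiv.swap_apply_left 0 i₀)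
  refine ⟨w ∘ Equiv.swap 0 i₀, hw0, fun i => ?_, fun i j hij => ?_, fun i => ?_⟩
  · rw [Function.comp_apply, hw]; exact hmem _
  · rw [Function.comp_apply, Function.comp_apply, hw, hw]
    exact hdisj _ _ ((Equiv.swap 0 i₀).injective.ne hij)
  · rw [Function.comp_apply, Function.comp_apply, hw, hw0]; exact hmap _

lemma injective_of_inter_chordSet_eq_empty {ι : Type*} {t : ι → Chord}
    (h : ∀ i j, i ≠ j → chordSet (t i) ∩ chordSet (t j) = ∅) : Function.Injective t := by
  intro i j hij
  by_contra hne
  obtain ⟨y, hy⟩ := chordSet_nonempty (t i)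
  exact (h i j hne ▸ ⟨hy, hij ▸ hy⟩ : y ∈ (∅ : Set ℂ))

lemma SiblingPairs.exists_siblings {Λ : Lamination} {Y : Fin 3 → SPt × SPt}
    (h : SiblingPairs Λ Y) :
    ∃ t : Fin 3 → Chord, (∃ i, t i = s((Y 0).1, (Y 0).2)) ∧ (∀ i, t i ∈ Λ.leaves) ∧
      Function.Injective t ∧ (∀ i j, i ≠ j → chordSet (t i) ∩ chordSet (t j) = ∅) ∧
      ∀ i, chordMap 3 (t i) = chordMap 3 s((Y 0).1, (Y 0).2) :=
  ⟨fun i => s((Y i).1, (Y i).2), ⟨0, rfl⟩, h.1, injective_of_inter_chordSet_eq_empty h.2.1,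
    h.2.1, h.2.2⟩

lemma siblingPairs_of_tendsto (hΛ : Tendsto (fun k => (Θ k).endpoints) atTop (𝓝 Λ.endpoints))
    {ψ : ℕ → ℕ} (hψ : Tendsto ψ atTop atTop) {Y : ℕ → Fin 3 → SPt × SPt}
    {Yl : Fin 3 → SPt × SPt} (hY : Tendsto Y atTop (𝓝 Yl)) {δ : ℝ} (hδ : 0 < δ)
    (h : ∀ n, SiblingPairs (Θ (ψ n)) (Y n) ∧
      δ ≤ dist (sigmaS 3 (Y n 0).1) (sigmaS 3 (Y n 0).2)) :
    SiblingPairs Λ Yl := by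
  have hYi : ∀ i, Tendsto (fun n => Y n i) atTop (𝓝 (Yl i)) :=
    fun i => ((continuous_apply i).tendsto _).comp hY
  have hσ := (continuous_sigmaS 3).prodMap (continuous_sigmaS 3)
  refine ⟨fun i => NonemptyCompacts.mem_of_tendsto hΛ hψ (fun n => (h n).1.1 i) (hYi i),
    fun i j hij => ?_, fun i => Sym2.eq_of_tendsto ((hσ.tendsto _).comp (hYi i))
      ((hσ.tendsto _).comp (hYi 0)) (Eventually.of_forall fun n => (h n).1.2.2 i)⟩
  refine inter_chordSet_eq_empty_of_tendsto (hYi i) (hYi j) (ε := min (1 / 3) (δ / 3))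
    (by positivity) fun n => ⟨(h n).1.2.1 i j hij, fun a ha b hb => ?_⟩
  exact (min_le_min le_rfl (by linarith [(h n).2])).trans (min_le_dist_of_siblings
    ((h n).1.2.1 i j hij) ((h n).1.2.2 i) ((h n).1.2.2 j) ha hb)

lemma exists_siblings_of_tendsto
    (hΛ : Tendsto (fun k => (Θ k).endpoints) atTop (𝓝 Λ.endpoints))
    (hinv : ∀ k, (Θ k).Invariant 3) {q : SPt × SPt} (hq : s(q.1, q.2) ∈ Λ.leaves)
    (himg : ¬ (chordMap 3 s(q.1, q.2)).IsDiag) :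
    ∃ t : Fin 3 → Chord, (∃ i, t i = s(q.1, q.2)) ∧ (∀ i, t i ∈ Λ.leaves) ∧
      Function.Injective t ∧ (∀ i j, i ≠ j → chordSet (t i) ∩ chordSet (t j) = ∅) ∧
      ∀ i, chordMap 3 (t i) = chordMap 3 s(q.1, q.2) := by
  obtain ⟨x, hx, hxq⟩ := NonemptyCompacts.exists_tendsto_of_mem hΛ hq
  set δ := dist (sigmaS 3 q.1) (sigmaS 3 q.2)
  have hδ : 0 < δ := dist_pos.mpr fun h => himg (Sym2.mk_isDiag_iff.mpr h)
  have hcont : Continuous fun w : SPt × SPt => dist (sigmaS 3 w.1) (sigmaS 3 w.2) :=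
    ((continuous_sigmaS 3).comp continuous_fst).dist ((continuous_sigmaS 3).comp continuous_snd)
  obtain ⟨N, hN⟩ := eventually_atTop.mp
    (((hcont.tendsto q).comp hxq).eventually (lt_mem_nhds (half_lt_self hδ)))
  have hxN : ∀ n, δ / 2 < dist (sigmaS 3 (x (n + N)).1) (sigmaS 3 (x (n + N)).2) :=
    fun n => hN _ (Nat.le_add_left N n)
  choose Y hY0 hY using fun n =>
    (hinv (n + N)).exists_siblingPairs (hx (n + N)) fun h => by
      have := hxN n
      rw [Sym2.mk_isDiag_iff.mp h, dist_self] at this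
      linarith
  obtain ⟨Yl, φ, hφ, hYl⟩ := CompactSpace.tendsto_subseq Y
  have hψ : Tendsto (fun n => φ n + N) atTop atTop :=
    (tendsto_add_atTop_nat N).comp hφ.tendsto_atTop
  have h0 : Yl 0 = q := tendsto_nhds_unique (((continuous_apply 0).tendsto _).comp hYl)
    (by simp only [Function.comp_def, hY0]; exact hxq.comp hψ)
  have hpairs := siblingPairs_of_tendsto hΛ hψ hYl (half_pos hδ) fun n =>
    ⟨hY (φ n), by rw [Function.comp_apply, hY0]; exact (hxN (φ n)).le⟩
  rw [← h0]
  exact hpairs.exists_siblings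

lemma Lamination.Invariant.of_tendsto
    (hΛ : Tendsto (fun k => (Θ k).endpoints) atTop (𝓝 Λ.endpoints))
    (hinv : ∀ k, (Θ k).Invariant 3) : Λ.Invariant 3 :=
  ⟨chordMap_mem_of_tendsto hΛ fun k => (hinv k).1,
    exists_chordMap_eq_of_tendsto hΛ fun k => (hinv k).2.1,
    fun ℓ hℓ himg => by
      induction ℓ using Sym2.ind with
      | h a b => exact exists_siblings_of_tendsto hΛ hinv (q := (a, b)) hℓ himg⟩

lemma Lamination.NonemptyLam.of_tendsto
    (hΛ : Tendsto (fun k => (Θ k).endpoints) atTop (𝓝 Λ.endpoints))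
    (hinv : ∀ k, (Θ k).Invariant 3) (hne : ∀ k, (Θ k).NonemptyLam) : Λ.NonemptyLam := by
  choose q hq hlong using fun k => exists_long_leaf (hinv k).1 (hne k)
  obtain ⟨q₀, φ, hφ, hq₀⟩ := CompactSpace.tendsto_subseq q
  refine ⟨s(q₀.1, q₀.2), NonemptyCompacts.mem_of_tendsto hΛ hφ.tendsto_atTop (fun n => hq (φ n))
    hq₀, fun hd => ?_⟩
  have hlong₀ : 1 / 3 ≤ dist q₀.1 q₀.2 :=
    (isClosed_le continuous_const (continuous_fst.dist continuous_snd)).mem_of_tendsto hq₀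
      (Eventually.of_forall fun n => hlong (φ n))
  rw [Sym2.mk_isDiag_iff.mp hd, dist_self] at hlong₀
  norm_num at hlong₀

end LimitLamination

section ChordDistance

def chordCompacts (ℓ : Chord) : NonemptyCompacts ℂ :=
  ⟨⟨chordSet ℓ, isCompact_chordSet ℓ⟩, chordSet_nonempty ℓ⟩

lemma chordDist_eq_dist (ℓ₁ ℓ₂ : Chord) :
    chordDist ℓ₁ ℓ₂ = dist (chordCompacts ℓ₁) (chordCompacts ℓ₂) :=
  rfl

lemma chordDist_triangle (ℓ₁ ℓ₂ ℓ₃ : Chord) :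
    chordDist ℓ₁ ℓ₃ ≤ chordDist ℓ₁ ℓ₂ + chordDist ℓ₂ ℓ₃ :=
  dist_triangle (chordCompacts ℓ₁) (chordCompacts ℓ₂) (chordCompacts ℓ₃)

lemma chordCompacts_injective : Function.Injective chordCompacts := fun _ _ h =>
  chordSet_injective (congrArg (fun K : NonemptyCompacts ℂ => (K : Set ℂ)) h)

lemma dist_combo_le {E : Type*} [SeminormedAddCommGroup E] [NormedSpace ℝ E] (a b c d : E)
    {u v : ℝ} (hu : 0 ≤ u) (hv : 0 ≤ v) (huv : u + v = 1) :
    dist (u • a + v • b) (u • c + v • d) ≤ max (dist a c) (dist b d) :=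
  calc dist (u • a + v • b) (u • c + v • d) ≤ dist (u • a) (u • c) + dist (v • b) (v • d) :=
        dist_add_add_le _ _ _ _
    _ = u * dist a c + v * dist b d := by
        rw [dist_smul₀, dist_smul₀, Real.norm_of_nonneg hu, Real.norm_of_nonneg hv]
    _ ≤ u * max (dist a c) (dist b d) + v * max (dist a c) (dist b d) := by
        gcongr
        exacts [le_max_left _ _, le_max_right _ _]
    _ = max (dist a c) (dist b d) := by rw [← add_mul, huv, one_mul]

lemma chordDist_mk_le_dist (p q : SPt × SPt) : chordDist s(p.1, p.2) s(q.1, q.2) ≤ dist p q := by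
  have hle : max (dist (p.1 : ℂ) q.1) (dist (p.2 : ℂ) q.2) = dist p q := by
    rw [Prod.dist_eq, Subtype.dist_eq, Subtype.dist_eq]
  rw [← hle]
  refine hausdorffDist_le_of_mem_dist (le_max_of_le_left dist_nonneg) ?_ ?_
  · rintro _ ⟨u, v, hu, hv, huv, rfl⟩
    exact ⟨u • (q.1 : ℂ) + v • (q.2 : ℂ), ⟨u, v, hu, hv, huv, rfl⟩, dist_combo_le _ _ _ _ hu hv huv⟩
  · rintro _ ⟨u, v, hu, hv, huv, rfl⟩
    refine ⟨u • (p.1 : ℂ) + v • (p.2 : ℂ), ⟨u, v, hu, hv, huv, rfl⟩, ?_⟩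
    simpa only [dist_comm] using dist_combo_le (q.1 : ℂ) q.2 p.1 p.2 hu hv huv

lemma exists_subseq_tendsto_of_chordDist {e : ℕ → Chord} {c : Chord}
    (he : Tendsto (fun n => chordDist (e n) c) atTop (𝓝 0)) :
    ∃ (φ : ℕ → ℕ) (w : ℕ → SPt × SPt) (u : SPt × SPt), StrictMono φ ∧
      (∀ n, s((w n).1, (w n).2) = e (φ n)) ∧ s(u.1, u.2) = c ∧ Tendsto w atTop (𝓝 u) := by
  choose w₀ hw₀ using fun n => Sym2.mk_surjective (e n)
  obtain ⟨u, φ, hφ, hu⟩ := CompactSpace.tendsto_subseq w₀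
  refine ⟨φ, w₀ ∘ φ, u, hφ, fun n => hw₀ (φ n), chordCompacts_injective ?_, hu⟩
  refine tendsto_nhds_unique (f := fun n => chordCompacts (e (φ n))) (l := atTop) ?_
    (tendsto_iff_dist_tendsto_zero.mpr (he.comp hφ.tendsto_atTop))
  refine tendsto_iff_dist_tendsto_zero.mpr (squeeze_zero (fun _ => dist_nonneg) (fun n => ?_)
    (tendsto_iff_dist_tendsto_zero.mp hu))
  rw [← chordDist_eq_dist, ← hw₀ (φ n)]
  exact chordDist_mk_le_dist _ _

end ChordDistance

section Convergence

variable {Θ : ℕ → Lamination} {Λ : Lamination}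

lemma lamTendsto_of_tendsto_endpoints
    (hΛ : Tendsto (fun k => (Θ k).endpoints) atTop (𝓝 Λ.endpoints)) : LamTendsto Θ Λ := by
  intro ε hε
  filter_upwards [(tendsto_iff_dist_tendsto_zero.mp hΛ).eventually (gt_mem_nhds hε)] with k hk
  have hk' : hausdorffDist ((Θ k).endpoints : Set (SPt × SPt)) Λ.endpoints < ε := hk
  have hfin := hausdorffEDist_ne_top_of_nonempty_of_bounded (Θ k).endpoints.nonempty
    Λ.endpoints.nonempty (Θ k).endpoints.isCompact.isBounded Λ.endpoints.isCompact.isBounded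
  constructor
  · intro ℓ hℓ
    induction ℓ using Sym2.ind with | h a b => ?_
    obtain ⟨q, hq, hd⟩ := exists_dist_lt_of_hausdorffDist_lt (x := (a, b)) hℓ hk' hfin
    exact ⟨s(q.1, q.2), hq, (chordDist_mk_le_dist (a, b) q).trans_lt hd⟩
  · intro ℓ hℓ
    induction ℓ using Sym2.ind with | h a b => ?_
    obtain ⟨q, hq, hd⟩ := exists_dist_lt_of_hausdorffDist_lt' (y := (a, b)) hℓ hk' hfin
    exact ⟨s(q.1, q.2), hq, (chordDist_mk_le_dist q (a, b)).trans_lt hd⟩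

lemma LamTendsto.exists_diagonal {C : ℕ → ℕ → Lamination} (hC : ∀ k, LamTendsto (C k) (Θ k))
    (hΘ : LamTendsto Θ Λ) : ∃ n : ℕ → ℕ, LamTendsto (fun k => C k (n k)) Λ := by
  choose n hn₁ hn₂ using fun k => (hC k (1 / (k + 1)) Nat.one_div_pos_of_nat).exists
  refine ⟨n, fun ε hε => ?_⟩
  filter_upwards [hΘ (ε / 2) (half_pos hε),
    tendsto_one_div_add_atTop_nhds_zero_nat.eventually (gt_mem_nhds (half_pos hε))]
    with k ⟨hk₁, hk₂⟩ hk
  constructor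
  · intro ℓ hℓ
    obtain ⟨ℓ₁, hℓ₁, hd₁⟩ := hn₁ k ℓ hℓ
    obtain ⟨ℓ₂, hℓ₂, hd₂⟩ := hk₁ ℓ₁ hℓ₁
    exact ⟨ℓ₂, hℓ₂, by linarith [chordDist_triangle ℓ ℓ₁ ℓ₂]⟩
  · intro ℓ hℓ
    obtain ⟨ℓ₁, hℓ₁, hd₁⟩ := hk₂ ℓ hℓ
    obtain ⟨ℓ₂, hℓ₂, hd₂⟩ := hn₂ k ℓ₁ hℓ₁
    exact ⟨ℓ₂, hℓ₂, by linarith [chordDist_triangle ℓ₂ ℓ₁ ℓ]⟩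

lemma IsLimitLam.of_tendsto (hΛ : Tendsto (fun k => (Θ k).endpoints) atTop (𝓝 Λ.endpoints))
    (hlim : ∀ k, IsLimitLam (Θ k)) : IsLimitLam Λ := by
  choose C hC hCΘ using fun k => (hlim k).2
  obtain ⟨n, hn⟩ := LamTendsto.exists_diagonal hCΘ (lamTendsto_of_tendsto_endpoints hΛ)
  exact ⟨.of_tendsto hΛ fun k => (hlim k).1, fun k => C k (n k), fun k => hC k (n k), hn⟩

lemma exists_mem_chordDist_le_portraitDist (P : Portrait) {K : Portrait} {c : Chord}
    (hc : c ∈ K) : ∃ e ∈ P, chordDist e c ≤ portraitDist P K := by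
  induction P using Sym2.ind with | h u v => ?_
  induction K using Sym2.ind with | h x y => ?_
  simp only [portraitDist, Sym2.lift₂_mk]
  rcases le_total (max (chordDist u x) (chordDist v y)) (max (chordDist u y) (chordDist v x))
    with h | h
  · rw [min_eq_left h]
    rcases Sym2.mem_iff.mp hc with rfl | rfl
    · exact ⟨u, Sym2.mem_mk_left _ _, le_max_left _ _⟩
    · exact ⟨v, Sym2.mem_mk_right _ _, le_max_right _ _⟩
  · rw [min_eq_right h]
    rcases Sym2.mem_iff.mp hc with rfl | rfl
    · exact ⟨v, Sym2.mem_mk_right _ _, le_max_right _ _⟩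
    · exact ⟨u, Sym2.mem_mk_left _ _, le_max_left _ _⟩

lemma Compat.of_tendsto (hΛ : Tendsto (fun k => (Θ k).endpoints) atTop (𝓝 Λ.endpoints))
    {P : ℕ → Portrait} {K : Portrait} (hP : PortraitTendsto P K)
    (hcompat : ∀ k, Compat (P k) (Θ k)) : Compat K Λ := by
  intro c hc ℓ hℓ hcross
  choose e he hec using fun k => exists_mem_chordDist_le_portraitDist (P k) hc
  obtain ⟨φ, w, u, hφ, hw, rfl, hwu⟩ := exists_subseq_tendsto_of_chordDist
    (squeeze_zero (fun _ => hausdorffDist_nonneg) hec hP)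
  induction ℓ using Sym2.ind with | h a b => ?_
  obtain ⟨x, hx, hxab⟩ := NonemptyCompacts.exists_tendsto_of_mem hΛ (y := (a, b)) hℓ
  obtain ⟨n, hn⟩ := (hwu.eventually_cross (hxab.comp hφ.tendsto_atTop) hcross).exists
  exact hcompat (φ n) _ ((hw n).symm ▸ he (φ n)) _ (hx (φ n)) hn

lemma Compat.mono {K : Portrait} {Λ' : Lamination} (h : Compat K Λ)
    (hsub : Λ'.leaves ⊆ Λ.leaves) : Compat K Λ' :=
  fun c hc ℓ hℓ => h c hc ℓ (hsub hℓ)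

end Convergence

/-- friends are compatible with a common chief, and friendship
is a closed relation. -/
theorem stmt11 :
    (∀ K₁ K₂ : Portrait, Friends K₁ K₂ →
      ∃ Λ : Lamination, IsChief Λ ∧ K₁ ∈ CC Λ ∧ K₂ ∈ CC Λ) ∧
    (∀ (Ki Ki' : ℕ → Portrait) (K K' : Portrait), K ∈ CrP → K' ∈ CrP →
      PortraitTendsto Ki K → PortraitTendsto Ki' K' →
      (∀ i, Friends (Ki i) (Ki' i)) → Friends K K') := by
  refine ⟨fun K₁ K₂ ⟨Λ, hlim, hne, h₁, h₂⟩ => ?_, fun Ki Ki' K K' hK hK' hKi hKi' hfr => ?_⟩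
  · obtain ⟨Λc, hchief⟩ := exists_isChiefOf hlim.1 hne
    exact ⟨Λc, ⟨Λ, hlim, hne, hchief⟩, ⟨h₁.1, h₁.2.mono hchief.1⟩, ⟨h₂.1, h₂.2.mono hchief.1⟩⟩
  · choose Λs hlim hne h₁ h₂ using hfr
    obtain ⟨R, φ, hφ, hR⟩ := CompactSpace.tendsto_subseq fun i => (Λs i).endpoints
    obtain ⟨Λ, rfl⟩ := exists_endpoints_eq_of_tendsto (Θ := Λs ∘ φ) hR
    exact ⟨Λ, .of_tendsto hR fun k => hlim (φ k),
      .of_tendsto hR (fun k => (hlim (φ k)).1) fun k => hne (φ k),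
      ⟨hK, .of_tendsto hR (hKi.comp hφ.tendsto_atTop) fun k => (h₁ (φ k)).2⟩,
      ⟨hK', .of_tendsto hR (hKi'.comp hφ.tendsto_atTop) fun k => (h₂ (φ k)).2⟩⟩
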